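/- arXiv:math/0309314 — 2 statements merged into one kernel-verified Lean document; each statement's English description precedes it below -/
import Mathlib

section
/- Let g be a real semisimple Lie algebra with Cartan involution θ, Cartan decomposition g = k ⊕ m, and let B_θ(X,Y) = −B(X, θY) denote the associated positive definite inner product (B the Killing form). If Y = Ad(g)Y′ for some g in the adjoint group G and some Y′ ∈ k, then B_θ(Y′, Y′) ≤ B_θ(Y, Y). -/
/-!
`Ad(g)` preserves the Killing form `B`: with respect to `B` the adjoint of `ad X` is `-ad X`, so
the adjoint of `exp (ad X)` is `exp (-ad X) = (exp (ad X))⁻¹`. Since `θ Y' = Y'`, this gives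
`B_θ(Y', Y') = -B(Y', Y') = -B(Y, Y)`. On the other hand, for every `Z` the vector
`W = Z - θ Z` satisfies `θ W = -W`, and the `θ`-invariance of `B` gives
`0 ≤ B_θ(W, W) = B(W, W) = 2 (B_θ(Z, Z) + B(Z, Z))`, that is `-B(Z, Z) ≤ B_θ(Z, Z)`.
-/

/-- The Killing form `B(X,Y) = tr(ad X ∘ ad Y)` of a (finite-dimensional real) Lie
algebra whose bracket is given by the bilinear map `br`. -/
noncomputable def killingB {L : Type*} [NormedAddCommGroup L] [NormedSpace ℝ L]
    [FiniteDimensional ℝ L] (br : L →ₗ[ℝ] L →ₗ[ℝ] L) (X Y : L) : ℝ :=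
  LinearMap.trace ℝ L ((br X) ∘ₗ (br Y))

/-- The positive definite form `B_θ(X,Y) = −B(X, θY)` associated to a Cartan
involution `θ`. -/
noncomputable def Btheta {L : Type*} [NormedAddCommGroup L] [NormedSpace ℝ L]
    [FiniteDimensional ℝ L] (br : L →ₗ[ℝ] L →ₗ[ℝ] L) (θ : L →ₗ[ℝ] L) (X Y : L) : ℝ :=
  -(killingB br X (θ Y))

/-- The elements `exp(ad X)`, `X ∈ g`, generating the connected adjoint group of `g`. -/
noncomputable def expAdSet {L : Type*} [NormedAddCommGroup L] [NormedSpace ℝ L]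
    [FiniteDimensional ℝ L] (br : L →ₗ[ℝ] L →ₗ[ℝ] L) : Set (L →ₗ[ℝ] L) :=
  {f | ∃ X : L, f =
    ((NormedSpace.exp (LinearMap.toContinuousLinearMap (br X)) : L →L[ℝ] L) : L →ₗ[ℝ] L)}

namespace LinearMap.IsAdjointPair

variable {𝕜 E : Type*} [RCLike 𝕜] [NormedAddCommGroup E] [NormedSpace 𝕜 E]
  {Φ : E →ₗ[𝕜] E →ₗ[𝕜] 𝕜}

theorem pow {A A' : E →L[𝕜] E} (h : IsAdjointPair Φ Φ A A') (n : ℕ) :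
    IsAdjointPair Φ Φ ⇑(A ^ n) ⇑(A' ^ n) := by
  induction n with
  | zero => exact isAdjointPair_id
  | succ n ih =>
    rw [pow_succ A, pow_succ' A']
    exact h.comp ih

theorem exp [FiniteDimensional 𝕜 E] {A A' : E →L[𝕜] E} (h : IsAdjointPair Φ Φ A A') :
    IsAdjointPair Φ Φ ⇑(NormedSpace.exp A) ⇑(NormedSpace.exp A') := by
  have := FiniteDimensional.complete 𝕜 E
  intro u w
  have hl := (NormedSpace.exp_series_hasSum_exp' (𝕂 := 𝕜) A).mapL
    ((LinearMap.toContinuousLinearMap (Φ.flip w)).comp (ContinuousLinearMap.apply 𝕜 E u))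
  have hr := (NormedSpace.exp_series_hasSum_exp' (𝕂 := 𝕜) A').mapL
    ((LinearMap.toContinuousLinearMap (Φ u)).comp (ContinuousLinearMap.apply 𝕜 E w))
  simp only [ContinuousLinearMap.comp_apply, ContinuousLinearMap.apply_apply,
    LinearMap.coe_toContinuousLinearMap', LinearMap.flip_apply, map_smul,
    h.pow _ u w] at hl hr
  exact hl.unique hr

end LinearMap.IsAdjointPair

section Killing

variable {L : Type*} [NormedAddCommGroup L] [NormedSpace ℝ L] [FiniteDimensional ℝ L]
  {br : L →ₗ[ℝ] L →ₗ[ℝ] L} {θ : L →ₗ[ℝ] L}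

variable (br) in
noncomputable def killingBilin : L →ₗ[ℝ] L →ₗ[ℝ] ℝ :=
  .mk₂ ℝ (killingB br)
    (fun _ _ _ => by simp only [killingB, map_add, LinearMap.add_comp])
    (fun _ _ _ => by simp only [killingB, map_smul, LinearMap.smul_comp])
    (fun _ _ _ => by simp only [killingB, map_add, LinearMap.comp_add])
    (fun _ _ _ => by simp only [killingB, map_smul, LinearMap.comp_smul])

@[simp]
theorem killingBilin_apply (X Y : L) : killingBilin br X Y = killingB br X Y := rfl

variable (br) in
theorem killingB_comm (X Y : L) : killingB br X Y = killingB br Y X :=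
  LinearMap.trace_comp_comm' _ _

theorem killingB_lie_left (hjac : ∀ X Y Z : L, br X (br Y Z) = br (br X Y) Z + br Y (br X Z))
    (X Y Z : L) : killingB br (br X Y) Z = -killingB br Y (br X Z) := by
  have had : ∀ Y, br (br X Y) = br X ∘ₗ br Y - br Y ∘ₗ br X := fun Y => by
    ext Z; simp only [LinearMap.sub_apply, LinearMap.comp_apply, hjac X Y Z]; abel
  simp only [killingB, had, LinearMap.sub_comp, LinearMap.comp_sub, map_sub,
    LinearMap.comp_assoc]
  rw [LinearMap.trace_comp_comm' (br Y ∘ₗ br Z) (br X)]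
  simp only [LinearMap.comp_assoc]
  ring

theorem isAdjointPair_killingBilin_ad
    (hjac : ∀ X Y Z : L, br X (br Y Z) = br (br X Y) Z + br Y (br X Z)) (X : L) :
    (killingBilin br).IsAdjointPair (killingBilin br) (br X) ⇑(-br X) := fun Y Z => by
  rw [LinearMap.neg_apply, map_neg, killingBilin_apply, killingB_lie_left hjac]; rfl

theorem isOrthogonal_killingBilin_of_mem_expAdSet
    (hjac : ∀ X Y Z : L, br X (br Y Z) = br (br X Y) Z + br Y (br X Z)) {g : L →ₗ[ℝ] L}
    (hg : g ∈ expAdSet br) : (killingBilin br).IsOrthogonal g := by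
  obtain ⟨X, rfl⟩ := hg
  set A := LinearMap.toContinuousLinearMap (br X)
  have hadj : (killingBilin br).IsAdjointPair (killingBilin br) A ⇑(-A) :=
    isAdjointPair_killingBilin_ad hjac X
  have hinv : NormedSpace.exp (-A) * NormedSpace.exp A = 1 := by
    -- `exp_add_of_commute` is stated for normed `ℚ`-algebras.
    let +nondep : NormedAlgebra ℚ (L →L[ℝ] L) := .restrictScalars ℚ ℝ _
    rw [← NormedSpace.exp_add_of_commute (Commute.refl A).neg_left, neg_add_cancel,
      NormedSpace.exp_zero]
  intro Y Z
  simp only [ContinuousLinearMap.coe_coe]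
  rw [hadj.exp, ← mul_apply_eq_comp, hinv, one_apply_eq_self]

theorem isOrthogonal_killingBilin_of_mem_closure
    (hjac : ∀ X Y Z : L, br X (br Y Z) = br (br X Y) Z + br Y (br X Z)) {g : L →ₗ[ℝ] L}
    (hg : g ∈ Submonoid.closure (expAdSet br)) : (killingBilin br).IsOrthogonal g := by
  induction hg using Submonoid.closure_induction with
  | mem g hg => exact isOrthogonal_killingBilin_of_mem_expAdSet hjac hg
  | one => exact fun _ _ => rfl
  | mul g h _ _ hg hh => exact fun Y Z => (hg (h Y) (h Z)).trans (hh Y Z)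

theorem killingB_map_map (hθ2 : ∀ X, θ (θ X) = X) (hθbr : ∀ X Y, θ (br X Y) = br (θ X) (θ Y))
    (X Y : L) : killingB br (θ X) (θ Y) = killingB br X Y := by
  let e := LinearEquiv.ofInvolutive θ hθ2
  have hconj : br (θ X) ∘ₗ br (θ Y) = e.conj (br X ∘ₗ br Y) := by
    have he : ∀ Z, e Z = θ Z := fun _ => rfl
    have he_symm : ∀ Z, e.symm Z = θ Z := fun Z => e.symm_apply_eq.2 (hθ2 Z).symm
    ext Z
    simp only [LinearMap.comp_apply, LinearEquiv.conj_apply, LinearEquiv.coe_coe, he, he_symm,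
      hθbr, hθ2]
  rw [killingB, hconj, LinearMap.trace_conj', killingB]

theorem neg_killingB_self_le_Btheta_self (hθ2 : ∀ X, θ (θ X) = X)
    (hθbr : ∀ X Y, θ (br X Y) = br (θ X) (θ Y))
    (hpos : ∀ X : L, X ≠ 0 → 0 < Btheta br θ X X) (Z : L) :
    -killingB br Z Z ≤ Btheta br θ Z Z := by
  set W := Z - θ Z
  have hW : 0 ≤ Btheta br θ W W := by
    rcases eq_or_ne W 0 with hW | hW
    · simp [hW, Btheta, killingB]
    · exact (hpos W hW).le
  have hBW : Btheta br θ W W = 2 * (Btheta br θ Z Z + killingB br Z Z) := by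
    simp only [W, Btheta, ← killingBilin_apply, map_sub, LinearMap.sub_apply, hθ2]
    simp only [killingBilin_apply, killingB_map_map hθ2 hθbr, killingB_comm br (θ Z) Z]
    ring
  linarith

end Killing

theorem btheta_le_of_adjoint_orbit_general {L : Type*} [NormedAddCommGroup L] [NormedSpace ℝ L]
    [FiniteDimensional ℝ L]
    (br : L →ₗ[ℝ] L →ₗ[ℝ] L)
    (hjac : ∀ X Y Z : L, br X (br Y Z) = br (br X Y) Z + br Y (br X Z))
    (θ : L →ₗ[ℝ] L) (hθ2 : ∀ X, θ (θ X) = X)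
    (hθbr : ∀ X Y, θ (br X Y) = br (θ X) (θ Y))
    (hpos : ∀ X : L, X ≠ 0 → 0 < Btheta br θ X X)
    (g : L →ₗ[ℝ] L) (hg : g ∈ Submonoid.closure (expAdSet br))
    (Y' : L) (hY' : θ Y' = Y') :
    Btheta br θ Y' Y' ≤ Btheta br θ (g Y') (g Y') :=
  calc Btheta br θ Y' Y' = -killingB br Y' Y' := by rw [Btheta, hY']
    _ = -killingB br (g Y') (g Y') := by
      rw [← killingBilin_apply, ← isOrthogonal_killingBilin_of_mem_closure hjac hg]; rfl
    _ ≤ Btheta br θ (g Y') (g Y') := neg_killingB_self_le_Btheta_self hθ2 hθbr hpos _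

/-- Let `g` be a real semisimple Lie algebra (bracket `br`, Killing form `B`) with
Cartan involution `θ` and associated positive definite form `B_θ(X,Y) = −B(X,θY)`.
If `Y = Ad(g)Y′` for some `g` in the connected adjoint group (generated by the
`exp(ad X)`) and some `Y′` in `k = g^θ`, then `B_θ(Y′,Y′) ≤ B_θ(Y,Y)`. -/
theorem btheta_le_of_adjoint_orbit {L : Type*} [NormedAddCommGroup L] [NormedSpace ℝ L]
    [FiniteDimensional ℝ L]
    (br : L →ₗ[ℝ] L →ₗ[ℝ] L)
    (hskew : ∀ X Y : L, br X Y = -br Y X)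
    (hjac : ∀ X Y Z : L, br X (br Y Z) = br (br X Y) Z + br Y (br X Z))
    (θ : L →ₗ[ℝ] L) (hθ2 : ∀ X, θ (θ X) = X)
    (hθbr : ∀ X Y, θ (br X Y) = br (θ X) (θ Y))
    (hpos : ∀ X : L, X ≠ 0 → 0 < Btheta br θ X X)
    (g : L →ₗ[ℝ] L) (hg : g ∈ Submonoid.closure (expAdSet br))
    (Y' : L) (hY' : θ Y' = Y') :
    Btheta br θ Y' Y' ≤ Btheta br θ (g Y') (g Y') :=
  btheta_le_of_adjoint_orbit_general br hjac θ hθ2 hθbr hpos g hg Y' hY'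
end

section
/- Let g be a real semisimple Lie algebra with commuting involutions σ and θ (θ a Cartan involution), τ = σθ, and let t be a maximal abelian subspace of k ∩ q. For a = exp Y with Y ∈ t, define f_a = τ ∘ Ad(a) ∘ σ ∘ Ad(a)^{−1} on the complexification g_C. Then the fixed space of f_a is g_C^{f_a} = z_{k_C}(t) ⊕ ⊕_{α: e^{−2α(Y)}=1} k_C(t,α) ⊕ ⊕_{α: e^{−2α(Y)}=−1} m_C(t,α). -/
/-- The subspace of `g_C` of weight `α` for `t` on which `θ` acts by the scalar `sgn`:
for `sgn = 1` this is `k_C(t,α)`, for `sgn = −1` it is `m_C(t,α)`, and for `α = 0`,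
`sgn = 1` it is the centralizer `z_{k_C}(t)`. -/
def weightTheta {gC : Type*} [LieRing gC] [LieAlgebra ℂ gC]
    (θ : gC →ₗ⁅ℂ⁆ gC) (t : Set gC) (α : gC → ℂ) (sgn : ℂ) : Submodule ℂ gC where
  carrier := {X | (∀ Y ∈ t, ⁅Y, X⁆ = α Y • X) ∧ θ X = sgn • X}
  add_mem' := by
    rintro a b ⟨ha1, ha2⟩ ⟨hb1, hb2⟩
    exact ⟨fun Y hY => by rw [lie_add, ha1 Y hY, hb1 Y hY, smul_add],
      by rw [map_add, ha2, hb2, smul_add]⟩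
  zero_mem' := ⟨fun Y hY => by simp, by simp⟩
  smul_mem' := by
    rintro c x ⟨h1, h2⟩
    exact ⟨fun Y hY => by rw [lie_smul, h1 Y hY, smul_comm],
      by rw [map_smul, h2, smul_comm]⟩

/-!
Each summand `k_C(t,α)`, `m_C(t,α)`, `z_{k_C}(t)` lies in an eigenspace of `f_a`, with eigenvalue
`± e^{−2α(Y)}`: `σ` negates `t`-weights, so `Ad(a)⁻¹` and then `Ad(a)` both contribute
`e^{−α(Y)}`, and `θ` contributes the sign. The summands span `g_C` and eigenspaces of distinct
eigenvalues are independent, so the fixed space, the eigenspace for `1`, is the sum of the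
summands whose eigenvalue is `1`.
-/

theorem Module.End.eigenspace_eq_iSup_of_iSup_eq_top {R M κ : Type*} [CommRing R] [IsDomain R]
    [AddCommGroup M] [Module R M] [Module.IsTorsionFree R M] (f : Module.End R M)
    (V : κ → Submodule R M) (c : κ → R) (hV : ∀ k, V k ≤ f.eigenspace (c k))
    (hspan : ⨆ k, V k = ⊤) (μ : R) :
    f.eigenspace μ = ⨆ k, ⨆ _ : c k = μ, V k := by
  have hle : ⨆ k, ⨆ _ : c k = μ, V k ≤ f.eigenspace μ := iSup₂_le fun k hk => hk ▸ hV k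
  refine le_antisymm (fun x hx => ?_) hle
  have hx_split : x ∈ (⨆ k, ⨆ _ : c k = μ, V k) ⊔ ⨆ k, ⨆ _ : ¬c k = μ, V k := by
    rw [← iSup_split, hspan]
    exact Submodule.mem_top
  obtain ⟨y, hy, z, hz, rfl⟩ := Submodule.mem_sup.mp hx_split
  have hle_other : ⨆ k, ⨆ _ : ¬c k = μ, V k ≤ ⨆ ν, ⨆ _ : ν ≠ μ, f.eigenspace ν :=
    iSup₂_le fun k hk => le_iSup₂_of_le (c k) hk (hV k)
  have hz_eigen : z ∈ f.eigenspace μ := by simpa using sub_mem hx (hle hy)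
  rw [Submodule.disjoint_def.mp (f.eigenspaces_iSupIndep μ) z hz_eigen (hle_other hz), add_zero]
  exact hy

theorem LieHom.lie_map_eq_neg_smul {R L : Type*} [CommRing R] [LieRing L] [LieAlgebra R L]
    (σ : L →ₗ⁅R⁆ L) {Y X : L} {c : R} (hσY : σ Y = -Y) (hX : ⁅Y, X⁆ = c • X) :
    ⁅Y, σ X⁆ = (-c) • σ X := by
  rw [neg_smul, ← map_smul, ← hX, LieHom.map_lie, hσY, neg_lie, neg_neg]

section TwistedConj

variable {L : Type*} [LieRing L] [LieAlgebra ℂ L] (σ θ Ada AdaInv : L →ₗ⁅ℂ⁆ L)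

/-- The map `f_a = τ ∘ Ad(a) ∘ σ ∘ Ad(a)⁻¹`, `τ = σθ`, with `Ada = Ad(a)`, `AdaInv = Ad(a)⁻¹`. -/
def twistedConj : Module.End ℂ L :=
  σ.toLinearMap ∘ₗ θ.toLinearMap ∘ₗ Ada.toLinearMap ∘ₗ σ.toLinearMap ∘ₗ AdaInv.toLinearMap

variable {σ θ Ada AdaInv} {Y₀ : L} (hσσ : ∀ X, σ (σ X) = X) (hcomm : ∀ X, σ (θ X) = θ (σ X))
  (hσY₀ : σ Y₀ = -Y₀)
  (hAda : ∀ (c : ℂ) (W : L), ⁅Y₀, W⁆ = c • W → Ada W = Complex.exp c • W)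
  (hAdaInv : ∀ (c : ℂ) (W : L), ⁅Y₀, W⁆ = c • W → AdaInv W = Complex.exp (-c) • W)
include hσσ hcomm hσY₀ hAda hAdaInv

theorem twistedConj_apply_of_lie_eq_smul {X : L} {c s : ℂ} (hX : ⁅Y₀, X⁆ = c • X)
    (hθX : θ X = s • X) :
    twistedConj σ θ Ada AdaInv X = (s * Complex.exp (-(2 * c))) • X := by
  have hθσX : θ (σ X) = s • σ X := by rw [← hcomm, hθX, map_smul]
  change σ (θ (Ada (σ (AdaInv X)))) = _
  rw [hAdaInv c X hX, map_smul, map_smul, hAda (-c) (σ X) (σ.lie_map_eq_neg_smul hσY₀ hX)]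
  simp only [map_smul, hθσX, hσσ, smul_smul]
  rw [show -(2 * c) = -c + -c by ring, Complex.exp_add]
  ring_nf

theorem weightTheta_le_eigenspace_twistedConj {t : Set L} (hY₀ : Y₀ ∈ t) (α : L → ℂ) (s : ℂ) :
    weightTheta θ t α s ≤
      (twistedConj σ θ Ada AdaInv).eigenspace (s * Complex.exp (-(2 * α Y₀))) :=
  fun _ ⟨hXt, hθX⟩ => Module.End.mem_eigenspace_iff.mpr <|
    twistedConj_apply_of_lie_eq_smul hσσ hcomm hσY₀ hAda hAdaInv (hXt Y₀ hY₀) hθX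

end TwistedConj

theorem fixed_space_of_f_a_general {gC : Type*} [LieRing gC] [LieAlgebra ℂ gC]
    (σ θ : gC →ₗ⁅ℂ⁆ gC)
    (hσσ : ∀ X, σ (σ X) = X)
    (hcomm : ∀ X, σ (θ X) = θ (σ X))
    (t : Set gC) (Y₀ : gC) (hY₀ : Y₀ ∈ t)
    (hσt : ∀ Y ∈ t, σ Y = -Y)
    (Ada AdaInv : gC →ₗ⁅ℂ⁆ gC)
    (hAda : ∀ (c : ℂ) (W : gC), ⁅Y₀, W⁆ = c • W → Ada W = Complex.exp c • W)
    (hAdaInv : ∀ (c : ℂ) (W : gC), ⁅Y₀, W⁆ = c • W → AdaInv W = Complex.exp (-c) • W)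
    {ι : Type*} (αf : ι → gC → ℂ)
    (hspan : (⨆ o : Option (ι × Bool),
      o.elim (weightTheta θ t (fun _ => 0) 1) (fun p =>
        if p.2 then weightTheta θ t (αf p.1) 1 else weightTheta θ t (αf p.1) (-1))) = ⊤) :
    {X : gC | σ (θ (Ada (σ (AdaInv X)))) = X} =
      ↑(weightTheta θ t (fun _ => 0) 1 ⊔
        (⨆ i : ι, ⨆ _ : Complex.exp (-(2 * αf i Y₀)) = 1, weightTheta θ t (αf i) 1) ⊔
        (⨆ i : ι, ⨆ _ : Complex.exp (-(2 * αf i Y₀)) = -1,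
          weightTheta θ t (αf i) (-1))) := by
  set V : Option (ι × Bool) → Submodule ℂ gC := fun o =>
    o.elim (weightTheta θ t (fun _ => 0) 1) (fun p =>
      if p.2 then weightTheta θ t (αf p.1) 1 else weightTheta θ t (αf p.1) (-1))
  set c : Option (ι × Bool) → ℂ := fun o =>
    o.elim 1 (fun p => (if p.2 then 1 else -1) * Complex.exp (-(2 * αf p.1 Y₀)))
  have hle := weightTheta_le_eigenspace_twistedConj hσσ hcomm (hσt Y₀ hY₀) hAda hAdaInv hY₀
  have hV : ∀ o, V o ≤ (twistedConj σ θ Ada AdaInv).eigenspace (c o) := by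
    rintro (_ | ⟨i, _ | _⟩)
    · simpa [V, c] using hle (fun _ => 0) 1
    · simpa [V, c] using hle (αf i) (-1)
    · simpa [V, c] using hle (αf i) 1
  have hfix : {X | σ (θ (Ada (σ (AdaInv X)))) = X} =
      (twistedConj σ θ Ada AdaInv).eigenspace 1 := by
    ext X
    simp [twistedConj]
  rw [hfix, Module.End.eigenspace_eq_iSup_of_iSup_eq_top _ V c hV hspan]
  congr 1
  simp only [V, c, iSup_option, iSup_prod, iSup_bool_eq, Option.elim]
  simp [iSup_sup_eq, sup_assoc, neg_eq_iff_eq_neg]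

/-- Let `f_a = τ ∘ Ad(a) ∘ σ ∘ Ad(a)⁻¹` with `a = exp Y₀`, `Y₀ ∈ t`, acting on the
complexification `g_C = z_{k_C}(t) ⊕ ⊕_α (k_C(t,α) ⊕ m_C(t,α))`.  Then the fixed
space of `f_a` is
`g_C^{f_a} = z_{k_C}(t) ⊕ ⊕_{α : e^{−2α(Y₀)} = 1} k_C(t,α) ⊕ ⊕_{α : e^{−2α(Y₀)} = −1} m_C(t,α)`. -/
theorem fixed_space_of_f_a {gC : Type*} [LieRing gC] [LieAlgebra ℂ gC]
    (σ θ : gC →ₗ⁅ℂ⁆ gC)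
    (hσσ : ∀ X, σ (σ X) = X) (hθθ : ∀ X, θ (θ X) = X)
    (hcomm : ∀ X, σ (θ X) = θ (σ X))
    (t : Set gC) (Y₀ : gC) (hY₀ : Y₀ ∈ t)
    (hσt : ∀ Y ∈ t, σ Y = -Y) (hθt : ∀ Y ∈ t, θ Y = Y)
    (Ada AdaInv : gC →ₗ⁅ℂ⁆ gC)
    (hAda : ∀ (c : ℂ) (W : gC), ⁅Y₀, W⁆ = c • W → Ada W = Complex.exp c • W)
    (hAdaInv : ∀ (c : ℂ) (W : gC), ⁅Y₀, W⁆ = c • W → AdaInv W = Complex.exp (-c) • W)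
    {ι : Type*} [Fintype ι] (αf : ι → gC → ℂ)
    (hindep : iSupIndep (fun o : Option (ι × Bool) =>
      o.elim (weightTheta θ t (fun _ => 0) 1) (fun p =>
        if p.2 then weightTheta θ t (αf p.1) 1 else weightTheta θ t (αf p.1) (-1))))
    (hspan : (⨆ o : Option (ι × Bool),
      o.elim (weightTheta θ t (fun _ => 0) 1) (fun p =>
        if p.2 then weightTheta θ t (αf p.1) 1 else weightTheta θ t (αf p.1) (-1))) = ⊤) :
    {X : gC | σ (θ (Ada (σ (AdaInv X)))) = X} =
      ↑(weightTheta θ t (fun _ => 0) 1 ⊔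
        (⨆ i : ι, ⨆ _ : Complex.exp (-(2 * αf i Y₀)) = 1, weightTheta θ t (αf i) 1) ⊔
        (⨆ i : ι, ⨆ _ : Complex.exp (-(2 * αf i Y₀)) = -1,
          weightTheta θ t (αf i) (-1))) :=
  fixed_space_of_f_a_general σ θ hσσ hcomm t Y₀ hY₀ hσt Ada AdaInv hAda hAdaInv αf hspan
end
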